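/- Polynomial entropy, L^p form (inequality (3.11)). Let ψ ∈ Ψ(a,b), let T be a finite nonempty set, let Y(t) : X → ℝ be measurable for each t ∈ T, and let d be a pseudometric on T. Assume: (i) ‖Y(t)‖_{L^p(μ)} ≤ ψ(p) for all t ∈ T and p ∈ (a,b); (ii) ‖Y(t) − Y(s)‖_{L^p(μ)} ≤ ψ(p)·d(t,s) for all t, s ∈ T and p ∈ (a,b); (iii) there are κ > 0 and C₀ ≥ 1 such that for every ε ∈ (0,1] there exists an ε-net of (T, d) of cardinality at most C₀ ε^{−κ}. Then there is a constant C depending only on C₀ and κ (in particular not on T, ψ or p) such that for every p ∈ (a,b) with p > max(κ,1): ‖max_{t∈T} Y(t)‖_{L^p(μ)} ≤ C · ψ(p) · p/(p − κ). -/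

import Mathlib

open MeasureTheory ENNReal Set

noncomputable section

/-- The set of exponents p with a < p and p < b (b may be infinite). -/
def expSet (a : ℝ) (b : ℝ≥0∞) : Set ℝ := {p : ℝ | a < p ∧ ENNReal.ofReal p < b}

/-- The class Ψ(a,b). -/
structure IsPsi (a : ℝ) (b : ℝ≥0∞) (ψ : ℝ → ℝ) : Prop where
  one_le : ∀ p ∈ expSet a b, 1 ≤ ψ p
  bddOnCompacts : ∀ c d : ℝ, c ∈ expSet a b → d ∈ expSet a b → BddAbove (ψ '' Set.Icc c d)
  logConvex : ConvexOn ℝ (expSet a b) fun p => Real.log (ψ p)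

/-- L^p norm (real exponent). -/
def lpNorm {X : Type*} [MeasurableSpace X] (μ : Measure X) (f : X → ℝ) (p : ℝ) : ℝ≥0∞ :=
  (∫⁻ x, ENNReal.ofReal (|f x| ^ p) ∂μ) ^ (1 / p)

/-- Bilateral Grand Lebesgue norm. -/
def glNorm {X : Type*} [MeasurableSpace X] (μ : Measure X) (a : ℝ) (b : ℝ≥0∞) (ψ : ℝ → ℝ)
    (f : X → ℝ) : ℝ≥0∞ :=
  ⨆ p ∈ expSet a b, lpNorm μ f p / ENNReal.ofReal (ψ p)

/-- L^p norm for extended-real-valued functions. -/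
def lpNormE {X : Type*} [MeasurableSpace X] (μ : Measure X) (g : X → EReal) (p : ℝ) : ℝ≥0∞ :=
  (∫⁻ x, (g x).abs ^ p ∂μ) ^ (1 / p)

/-- Bilateral Grand Lebesgue norm for extended-real-valued functions. -/
def glNormE {X : Type*} [MeasurableSpace X] (μ : Measure X) (a : ℝ) (b : ℝ≥0∞) (ψ : ℝ → ℝ)
    (g : X → EReal) : ℝ≥0∞ :=
  ⨆ p ∈ expSet a b, lpNormE μ g p / ENNReal.ofReal (ψ p)

/-- L^p norm for `ℝ≥0∞`-valued functions. -/
def lpNormNN {X : Type*} [MeasurableSpace X] (μ : Measure X) (g : X → ℝ≥0∞) (p : ℝ) : ℝ≥0∞ :=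
  (∫⁻ x, g x ^ p ∂μ) ^ (1 / p)

end

/-!
Chaining along dyadic nets. Let `π n` map `T` into a `2⁻ⁿ`-net `F n` with at most
`C₀ 2^{κ n}` points. Telescoping along the chain `t, π K t, π (K-1) (π K t), …`, which ends in
`F 0`, bounds `|Y t|` pointwise by the sup over `T` of `|Y t - Y (π K t)|`, plus for each level
`k < K` the sup over `F (k+1)` of `|Y s - Y (π k s)|`, plus the sup over `F 0` of `|Y s|`.
In `L^p` a sup of `N` functions costs at most a factor `N^{1/p}`, so level `k` contributes
`ψ(p) (C₀ 2^{κ(k+1)})^{1/p} 2^{-k}`: a geometric series of ratio `2^{κ/p - 1}`, summing to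
`O(C₀ ψ(p) p/(p-κ))`. With `K = |T|` the first term is at most `ψ(p)`, as `|T| ≤ 2^{|T|}`.
-/

section LpNormNN

variable {X : Type*} [MeasurableSpace X] {μ : Measure X}

theorem lpNorm_eq_lpNormNN (f : X → ℝ) {p : ℝ} (hp : 0 ≤ p) :
    lpNorm μ f p = lpNormNN μ (fun x => ENNReal.ofReal |f x|) p := by
  simp only [_root_.lpNorm, lpNormNN, ENNReal.ofReal_rpow_of_nonneg (abs_nonneg _) hp]

theorem lpNormNN_zero {p : ℝ} (hp : 0 < p) : lpNormNN μ 0 p = 0 := by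
  simp [lpNormNN, ENNReal.zero_rpow_of_pos, hp]

theorem lpNormNN_mono {f g : X → ℝ≥0∞} (hfg : f ≤ g) {p : ℝ} (hp : 0 ≤ p) :
    lpNormNN μ f p ≤ lpNormNN μ g p :=
  ENNReal.rpow_le_rpow (lintegral_mono fun x => ENNReal.rpow_le_rpow (hfg x) hp) (by positivity)

theorem lpNormNN_add_le {f g : X → ℝ≥0∞} (hf : AEMeasurable f μ) (hg : AEMeasurable g μ)
    {p : ℝ} (hp : 1 ≤ p) : lpNormNN μ (f + g) p ≤ lpNormNN μ f p + lpNormNN μ g p :=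
  ENNReal.lintegral_Lp_add_le hf hg hp

theorem lpNormNN_sum_le {ι : Type*} (s : Finset ι) {f : ι → X → ℝ≥0∞}
    (hf : ∀ i ∈ s, AEMeasurable (f i) μ) {p : ℝ} (hp : 1 ≤ p) :
    lpNormNN μ (∑ i ∈ s, f i) p ≤ ∑ i ∈ s, lpNormNN μ (f i) p :=
  Finset.le_sum_of_subadditive_on_pred (fun g => lpNormNN μ g p) (AEMeasurable · μ)
    (lpNormNN_zero (by linarith)).le (fun _ _ hf hg => lpNormNN_add_le hf hg hp)
    (fun _ _ hf hg => hf.add hg) f hf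

theorem measurable_finsetSup {ι : Type*} (s : Finset ι) {g : ι → X → ℝ≥0∞}
    (hg : ∀ i, Measurable (g i)) : Measurable fun x => s.sup fun i => g i x := by
  simpa only [Finset.sup_eq_iSup, Finset.mem_coe] using
    Measurable.biSup _ s.countable_toSet fun i _ => hg i

theorem rpow_finsetSup_le_sum {ι : Type*} (s : Finset ι) (g : ι → ℝ≥0∞) {p : ℝ} (hp : 0 < p) :
    (s.sup g) ^ p ≤ ∑ i ∈ s, g i ^ p :=
  Finset.apply_sup_le_sum (f := (· ^ p)) (ENNReal.zero_rpow_of_pos hp) (fun {a b} => by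
    rw [(ENNReal.monotone_rpow_of_nonneg hp.le).map_sup]
    exact sup_le le_self_add le_add_self) s

theorem lpNormNN_finsetSup_le {ι : Type*} (s : Finset ι) {f : ι → X → ℝ}
    (hf : ∀ i, Measurable (f i)) {p : ℝ} (hp : 0 < p) {B : ℝ}
    (hB : ∀ i ∈ s, lpNorm μ (f i) p ≤ ENNReal.ofReal B) :
    lpNormNN μ (fun x => s.sup fun i => ENNReal.ofReal |f i x|) p
      ≤ ENNReal.ofReal ((s.card : ℝ) ^ (1 / p) * B) := by
  have hB' : ∀ i ∈ s, ∫⁻ x, ENNReal.ofReal |f i x| ^ p ∂μ ≤ ENNReal.ofReal B ^ p := by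
    intro i hi
    have := ENNReal.rpow_le_rpow ((lpNorm_eq_lpNormNN (f i) hp.le).symm.trans_le (hB i hi)) hp.le
    rwa [lpNormNN, ← ENNReal.rpow_mul, one_div_mul_cancel hp.ne', ENNReal.rpow_one] at this
  have hint :
      ∫⁻ x, (s.sup fun i => ENNReal.ofReal |f i x|) ^ p ∂μ ≤ s.card * ENNReal.ofReal B ^ p :=
    calc ∫⁻ x, (s.sup fun i => ENNReal.ofReal |f i x|) ^ p ∂μ
        ≤ ∫⁻ x, ∑ i ∈ s, ENNReal.ofReal |f i x| ^ p ∂μ :=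
          lintegral_mono fun x => rpow_finsetSup_le_sum s _ hp
      _ = ∑ i ∈ s, ∫⁻ x, ENNReal.ofReal |f i x| ^ p ∂μ :=
          lintegral_finsetSum s fun i _ => ((hf i).abs.ennreal_ofReal).pow_const p
      _ ≤ s.card * ENNReal.ofReal B ^ p := by
          simpa only [Finset.sum_const, nsmul_eq_mul] using Finset.sum_le_sum hB'
  calc lpNormNN μ (fun x => s.sup fun i => ENNReal.ofReal |f i x|) p
      ≤ (s.card * ENNReal.ofReal B ^ p) ^ (1 / p) := ENNReal.rpow_le_rpow hint (by positivity)
    _ = ENNReal.ofReal ((s.card : ℝ) ^ (1 / p) * B) := by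
      rw [ENNReal.mul_rpow_of_nonneg _ _ (by positivity), ← ENNReal.rpow_mul,
        mul_one_div_cancel hp.ne', ENNReal.rpow_one, ← ENNReal.ofReal_natCast,
        ENNReal.ofReal_rpow_of_nonneg (Nat.cast_nonneg _) (by positivity),
        ← ENNReal.ofReal_mul (by positivity)]

end LpNormNN

section Chaining

variable {T : Type*}

theorem ofReal_abs_le_ofReal_abs_sub_add (a b : ℝ) :
    ENNReal.ofReal |a| ≤ ENNReal.ofReal |a - b| + ENNReal.ofReal |b| := by
  rw [← ENNReal.ofReal_add (abs_nonneg _) (abs_nonneg _)]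
  exact ENNReal.ofReal_le_ofReal (by simpa using abs_add_le (a - b) b)

theorem ofReal_abs_le_chain_sum (F : ℕ → Finset T) (π : ℕ → T → T)
    (hπF : ∀ n t, π n t ∈ F n) (y : T → ℝ) (K : ℕ) {s : T} (hs : s ∈ F K) :
    ENNReal.ofReal |y s| ≤ ∑ k ∈ Finset.range K,
        ((F (k + 1)).sup fun u => ENNReal.ofReal |y u - y (π k u)|) +
      (F 0).sup fun u => ENNReal.ofReal |y u| := by
  induction K generalizing s with
  | zero => simpa using Finset.le_sup (f := fun u => ENNReal.ofReal |y u|) hs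
  | succ K ih =>
    calc ENNReal.ofReal |y s|
        ≤ ENNReal.ofReal |y s - y (π K s)| + ENNReal.ofReal |y (π K s)| :=
          ofReal_abs_le_ofReal_abs_sub_add _ _
      _ ≤ ((F (K + 1)).sup fun u => ENNReal.ofReal |y u - y (π K u)|) +
            (∑ k ∈ Finset.range K, ((F (k + 1)).sup fun u => ENNReal.ofReal |y u - y (π k u)|) +
              (F 0).sup fun u => ENNReal.ofReal |y u|) :=
          add_le_add (Finset.le_sup (f := fun u => ENNReal.ofReal |y u - y (π K u)|) hs)
            (ih (hπF K s))
      _ = _ := by rw [Finset.sum_range_succ]; ring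

theorem ofReal_abs_iSup_le_chain_sum [Fintype T] [Nonempty T] (F : ℕ → Finset T)
    (π : ℕ → T → T) (hπF : ∀ n t, π n t ∈ F n) (y : T → ℝ) (K : ℕ) :
    ENNReal.ofReal |⨆ t, y t| ≤
      (Finset.univ.sup fun t => ENNReal.ofReal |y t - y (π K t)|) +
        ∑ k ∈ Finset.range K, ((F (k + 1)).sup fun u => ENNReal.ofReal |y u - y (π k u)|) +
      (F 0).sup fun u => ENNReal.ofReal |y u| := by
  obtain ⟨t, ht⟩ := exists_eq_ciSup_of_finite (f := y)
  rw [← ht, add_assoc]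
  exact (ofReal_abs_le_ofReal_abs_sub_add _ (y (π K t))).trans (add_le_add
    (Finset.le_sup (f := fun t => ENNReal.ofReal |y t - y (π K t)|) (Finset.mem_univ t))
    (ofReal_abs_le_chain_sum F π hπF y K (hπF K t)))

end Chaining

theorem lpNorm_iSup_le_chain_sum {X T : Type*} [MeasurableSpace X] {μ : Measure X}
    [PseudoMetricSpace T] [Fintype T] [Nonempty T] {Y : T → X → ℝ} (hY : ∀ t, Measurable (Y t))
    {p A : ℝ} (hp : 1 ≤ p) (hA : 0 ≤ A) (hY_bdd : ∀ t, lpNorm μ (Y t) p ≤ ENNReal.ofReal A)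
    (hY_lip : ∀ t s, lpNorm μ (fun x => Y t x - Y s x) p ≤ ENNReal.ofReal (A * dist t s))
    (F : ℕ → Finset T) (π : ℕ → T → T) (hπF : ∀ n t, π n t ∈ F n) {ε : ℕ → ℝ}
    (hπε : ∀ n t, dist t (π n t) ≤ ε n) (K : ℕ) :
    lpNorm μ (fun x => ⨆ t, Y t x) p ≤ ENNReal.ofReal (A *
      ((Fintype.card T : ℝ) ^ (1 / p) * ε K +
        ∑ k ∈ Finset.range K, ((F (k + 1)).card : ℝ) ^ (1 / p) * ε k +
        ((F 0).card : ℝ) ^ (1 / p))) := by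
  have hp0 : 0 < p := by linarith
  have hε : ∀ n, 0 ≤ ε n := fun n => dist_nonneg.trans (hπε n (Classical.arbitrary T))
  have hlink : ∀ n t, lpNorm μ (fun x => Y t x - Y (π n t) x) p ≤ ENNReal.ofReal (A * ε n) :=
    fun n t => (hY_lip t (π n t)).trans
      (ENNReal.ofReal_le_ofReal (mul_le_mul_of_nonneg_left (hπε n t) hA))
  have hdiff : ∀ n t, Measurable fun x => Y t x - Y (π n t) x := fun n t => (hY t).sub (hY _)
  set R : X → ℝ≥0∞ := fun x => Finset.univ.sup fun t => ENNReal.ofReal |Y t x - Y (π K t) x|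
  set D : ℕ → X → ℝ≥0∞ := fun k x =>
    (F (k + 1)).sup fun u => ENNReal.ofReal |Y u x - Y (π k u) x|
  set M : X → ℝ≥0∞ := fun x => (F 0).sup fun u => ENNReal.ofReal |Y u x|
  have hRm : Measurable R := measurable_finsetSup _ fun t => (hdiff K t).abs.ennreal_ofReal
  have hDm : ∀ k, Measurable (D k) :=
    fun k => measurable_finsetSup _ fun t => (hdiff k t).abs.ennreal_ofReal
  have hMm : Measurable M := measurable_finsetSup _ fun t => (hY t).abs.ennreal_ofReal
  have hR : lpNormNN μ R p ≤ ENNReal.ofReal (A * ((Fintype.card T : ℝ) ^ (1 / p) * ε K)) := by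
    simpa only [Finset.card_univ, mul_left_comm A] using
      lpNormNN_finsetSup_le Finset.univ (hdiff K) hp0 fun t _ => hlink K t
  have hD : ∀ k, lpNormNN μ (D k) p ≤
      ENNReal.ofReal (A * (((F (k + 1)).card : ℝ) ^ (1 / p) * ε k)) := fun k => by
    simpa only [mul_left_comm A] using
      lpNormNN_finsetSup_le _ (hdiff k) hp0 fun t _ => hlink k t
  have hM : lpNormNN μ M p ≤ ENNReal.ofReal (A * ((F 0).card : ℝ) ^ (1 / p)) := by
    simpa only [mul_comm A] using lpNormNN_finsetSup_le _ hY hp0 fun t _ => hY_bdd t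
  calc lpNorm μ (fun x => ⨆ t, Y t x) p
      = lpNormNN μ (fun x => ENNReal.ofReal |⨆ t, Y t x|) p := lpNorm_eq_lpNormNN _ hp0.le
    _ ≤ lpNormNN μ (R + ∑ k ∈ Finset.range K, D k + M) p :=
        lpNormNN_mono (fun x => by
          simpa only [Pi.add_apply, Finset.sum_apply] using
            ofReal_abs_iSup_le_chain_sum F π hπF (Y · x) K) hp0.le
    _ ≤ lpNormNN μ R p + ∑ k ∈ Finset.range K, lpNormNN μ (D k) p + lpNormNN μ M p := by
        have hS : AEMeasurable (∑ k ∈ Finset.range K, D k) μ :=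
          Finset.aemeasurable_sum _ fun k _ => (hDm k).aemeasurable
        refine (lpNormNN_add_le (hRm.aemeasurable.add hS) hMm.aemeasurable hp).trans ?_
        gcongr
        refine (lpNormNN_add_le hRm.aemeasurable hS hp).trans ?_
        gcongr
        exact lpNormNN_sum_le _ (fun k _ => (hDm k).aemeasurable) hp
    _ ≤ ENNReal.ofReal (A * ((Fintype.card T : ℝ) ^ (1 / p) * ε K)) +
          ∑ k ∈ Finset.range K, ENNReal.ofReal (A * (((F (k + 1)).card : ℝ) ^ (1 / p) * ε k)) +
          ENNReal.ofReal (A * ((F 0).card : ℝ) ^ (1 / p)) :=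
        add_le_add (add_le_add hR (Finset.sum_le_sum fun k _ => hD k)) hM
    _ = _ := by
        have hterm : ∀ c : ℕ, ∀ n, 0 ≤ A * ((c : ℝ) ^ (1 / p) * ε n) :=
          fun c n => mul_nonneg hA (mul_nonneg (by positivity) (hε n))
        rw [← ENNReal.ofReal_sum_of_nonneg fun k _ => hterm _ k,
          ← ENNReal.ofReal_add (hterm _ K) (Finset.sum_nonneg fun k _ => hterm _ k),
          ← ENNReal.ofReal_add (add_nonneg (hterm _ K) (Finset.sum_nonneg fun k _ => hterm _ k))
            (by positivity), mul_add, mul_add, Finset.mul_sum]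

section DyadicSums

theorem rpow_le_mul_rpow_of_le_mul {x y c q : ℝ} (hx : 0 ≤ x) (hy : 0 ≤ y) (hc : 1 ≤ c)
    (hxy : x ≤ c * y) (hq0 : 0 ≤ q) (hq1 : q ≤ 1) : x ^ q ≤ c * y ^ q :=
  calc x ^ q ≤ (c * y) ^ q := Real.rpow_le_rpow hx hxy hq0
    _ = c ^ q * y ^ q := Real.mul_rpow (by linarith) hy
    _ ≤ c * y ^ q := by
        gcongr
        simpa using Real.rpow_le_rpow_of_exponent_le hc hq1

theorem natCast_rpow_mul_inv_two_pow_le_one (n : ℕ) {q : ℝ} (hq0 : 0 ≤ q) (hq1 : q ≤ 1) :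
    (n : ℝ) ^ q * (2 ^ n)⁻¹ ≤ 1 := by
  have h2n : (1 : ℝ) ≤ 2 ^ n := one_le_pow₀ one_le_two
  rw [mul_inv_le_iff₀ (by positivity), one_mul]
  calc (n : ℝ) ^ q ≤ (2 ^ n : ℝ) ^ q :=
        Real.rpow_le_rpow n.cast_nonneg (by exact_mod_cast Nat.lt_two_pow_self.le) hq0
    _ ≤ 2 ^ n := by simpa using Real.rpow_le_rpow_of_exponent_le h2n hq1

theorem sum_two_pow_rpow_mul_inv_two_pow_le {θ : ℝ} (hθ0 : 0 ≤ θ) (hθ1 : θ < 1) (K : ℕ) :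
    ∑ k ∈ Finset.range K, ((2 : ℝ) ^ (k + 1)) ^ θ * (2 ^ k)⁻¹ ≤ 4 / (1 - θ) := by
  set r : ℝ := 2 ^ θ / 2
  have h2θ : (2 : ℝ) ^ θ ≤ 1 + θ := by
    simpa [one_add_one_eq_two] using
      rpow_one_add_le_one_add_mul_self (s := 1) (by norm_num) hθ0 hθ1.le
  have hr1 : (1 - θ) / 2 ≤ 1 - r := by simp only [r]; linarith
  have hterm : ∀ k : ℕ, ((2 : ℝ) ^ (k + 1)) ^ θ * (2 ^ k)⁻¹ = 2 ^ θ * r ^ k := fun k => by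
    rw [← Real.rpow_pow_comm zero_le_two, div_pow]
    field_simp
    ring
  calc ∑ k ∈ Finset.range K, ((2 : ℝ) ^ (k + 1)) ^ θ * (2 ^ k)⁻¹
      = 2 ^ θ * ∑ k ∈ Finset.range K, r ^ k := by simp only [hterm, Finset.mul_sum]
    _ ≤ 2 * (1 / (1 - r)) := by
        have hgeom := geom_sum_Ico_le_of_lt_one (m := 0) (n := K) (by positivity : 0 ≤ r)
          (by linarith)
        rw [← Finset.range_eq_Ico, pow_zero] at hgeom
        refine mul_le_mul ?_ hgeom
          (Finset.sum_nonneg fun k _ => by positivity) zero_le_two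
        simpa using Real.rpow_le_rpow_of_exponent_le one_le_two hθ1.le
    _ ≤ 2 * (1 / ((1 - θ) / 2)) := by gcongr
    _ = 4 / (1 - θ) := by field_simp; ring

theorem sum_rpow_mul_inv_two_pow_le {N : ℕ → ℝ} {C₀ κ p : ℝ} (hN0 : ∀ n, 0 ≤ N n)
    (hN : ∀ n, N n ≤ C₀ * (2 ^ n) ^ κ) (hC₀ : 1 ≤ C₀) (hκ : 0 ≤ κ) (hp : 1 ≤ p) (hκp : κ < p)
    (K : ℕ) :
    ∑ k ∈ Finset.range K, N (k + 1) ^ (1 / p) * (2 ^ k)⁻¹ ≤ 4 * C₀ * (p / (p - κ)) := by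
  have hp0 : 0 < p := by linarith
  have hq1 : 1 / p ≤ 1 := by rw [div_le_one hp0]; exact hp
  have hN' : ∀ n, N n ^ (1 / p) ≤ C₀ * ((2 : ℝ) ^ n) ^ (κ / p) := fun n => by
    rw [div_eq_mul_one_div κ, Real.rpow_mul (by positivity)]
    exact rpow_le_mul_rpow_of_le_mul (hN0 n) (by positivity) hC₀ (hN n) (by positivity) hq1
  calc ∑ k ∈ Finset.range K, N (k + 1) ^ (1 / p) * (2 ^ k)⁻¹
      ≤ ∑ k ∈ Finset.range K, C₀ * (((2 : ℝ) ^ (k + 1)) ^ (κ / p) * (2 ^ k)⁻¹) :=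
        Finset.sum_le_sum fun k _ => by rw [← mul_assoc]; gcongr; exact hN' _
    _ ≤ C₀ * (4 / (1 - κ / p)) := by
        rw [← Finset.mul_sum]
        gcongr
        exact sum_two_pow_rpow_mul_inv_two_pow_le (by positivity) ((div_lt_one hp0).mpr hκp) K
    _ = 4 * C₀ * (p / (p - κ)) := by
        have : p - κ ≠ 0 := by linarith
        field_simp

end DyadicSums

theorem exists_dyadic_nets {T : Type*} [PseudoMetricSpace T] {C₀ κ : ℝ}
    (hnet : ∀ ε : ℝ, 0 < ε → ε ≤ 1 → ∃ F : Finset T,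
      ((F.card : ℝ) ≤ C₀ * ε ^ (-κ)) ∧ ∀ t : T, ∃ s ∈ F, dist t s ≤ ε) :
    ∃ (F : ℕ → Finset T) (π : ℕ → T → T), (∀ n, ((F n).card : ℝ) ≤ C₀ * (2 ^ n) ^ κ) ∧
      (∀ n t, π n t ∈ F n) ∧ ∀ n t, dist t (π n t) ≤ (2 ^ n)⁻¹ := by
  choose F hF_card hF_net using fun n : ℕ =>
    hnet ((2 : ℝ) ^ n)⁻¹ (by positivity) (inv_le_one_of_one_le₀ (one_le_pow₀ one_le_two))
  choose π hπF hπε using hF_net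
  refine ⟨F, π, fun n => ?_, hπF, hπε⟩
  simpa only [Real.rpow_neg (by positivity : (0 : ℝ) ≤ (2 ^ n)⁻¹),
    Real.inv_rpow (by positivity : (0 : ℝ) ≤ 2 ^ n), inv_inv] using hF_card n

/-- Polynomial entropy, `L^p` form (inequality (3.11)). -/
theorem polynomial_entropy_lp (κ C₀ : ℝ) (hκ : 0 < κ) (hC₀ : 1 ≤ C₀) :
    ∃ C : ℝ, 0 < C ∧
      ∀ (X : Type*) [MeasurableSpace X], ∀ (μ : Measure X) [SigmaFinite μ],
      ∀ (a : ℝ) (b : ℝ≥0∞), 1 ≤ a → ENNReal.ofReal a < b →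
      ∀ (ψ : ℝ → ℝ), IsPsi a b ψ →
      ∀ (T : Type*) [PseudoMetricSpace T] [Fintype T] [Nonempty T],
      ∀ (Y : T → X → ℝ), (∀ t, Measurable (Y t)) →
      (∀ t : T, ∀ p ∈ expSet a b, lpNorm μ (Y t) p ≤ ENNReal.ofReal (ψ p)) →
      (∀ t s : T, ∀ p ∈ expSet a b,
        lpNorm μ (fun x => Y t x - Y s x) p ≤ ENNReal.ofReal (ψ p * dist t s)) →
      (∀ ε : ℝ, 0 < ε → ε ≤ 1 → ∃ F : Finset T,
        ((F.card : ℝ) ≤ C₀ * ε ^ (-κ)) ∧ ∀ t : T, ∃ s ∈ F, dist t s ≤ ε) →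
      ∀ p ∈ expSet a b, max κ 1 < p →
        lpNorm μ (fun x => ⨆ t, Y t x) p ≤ ENNReal.ofReal (C * ψ p * (p / (p - κ))) := by
  refine ⟨6 * C₀, by positivity, ?_⟩
  intro X _ μ _ a b _ _ ψ hψ T _ _ _ Y hY hY_bdd hY_lip hnet p hp hp_max
  obtain ⟨hκp, hp1⟩ := max_lt_iff.mp hp_max
  have hψ1 : 1 ≤ ψ p := hψ.one_le p hp
  have hq : 1 ≤ p / (p - κ) := by rw [le_div_iff₀ (by linarith)]; linarith
  have hp_inv : 1 / p ≤ 1 := by rw [div_le_one (by linarith)]; exact hp1.le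
  obtain ⟨F, π, hF_card, hπF, hπε⟩ := exists_dyadic_nets hnet
  refine (lpNorm_iSup_le_chain_sum hY hp1.le (by linarith) (hY_bdd · p hp) (hY_lip · · p hp)
    F π hπF hπε (Fintype.card T)).trans (ENNReal.ofReal_le_ofReal ?_)
  have hR := natCast_rpow_mul_inv_two_pow_le_one (Fintype.card T) (by positivity) hp_inv
  have hS := sum_rpow_mul_inv_two_pow_le (fun n => (F n).card.cast_nonneg) hF_card hC₀ hκ.le
    hp1.le hκp (Fintype.card T)
  have hM : ((F 0).card : ℝ) ^ (1 / p) ≤ C₀ := by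
    simpa using rpow_le_mul_rpow_of_le_mul (F 0).card.cast_nonneg zero_le_one hC₀
      (by simpa using hF_card 0) (by positivity) hp_inv
  calc ψ p * (_ + _ + _) ≤ ψ p * (1 + 4 * C₀ * (p / (p - κ)) + C₀) := by gcongr
    _ ≤ ψ p * (6 * C₀ * (p / (p - κ))) := by gcongr; nlinarith
    _ = 6 * C₀ * ψ p * (p / (p - κ)) := by ring
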